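/- (Non-compactness of the logic of safety.) The set of formulas {▲_n φ : n ≥ 0} ∪ {¬▲φ} is unsatisfiable over epistemic models, but every finite subset of it is satisfiable (for suitable φ, e.g., an atom p, and |N| ≥ 4). Consequently the logic of epistemic logic with the ▲ operator is not compact. -/

import Mathlib

/-!
Over finitely many agents there are only finitely many groups of three, so by pigeonhole a
state satisfying every approximant `▲ₙ p` has one group that works for infinitely many, hence
all, `n`; thus `⋂ₙ ▲ₙ p` is a post-fixed point and `▲p` holds. In the other direction, on a
chain in which `p` holds at the first `m` states and neighbouring states are linked
alternately by agents `{0, 1}` and `{2, 3}`, every group of three can step forward, so `▲ₙ p`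
holds at the start exactly when `n < m`, while `▲p` fails there.
-/

/-- An epistemic (Kripke) model over agent set `Agt` and state set `St`. -/
structure Model (Agt : Type) (St : Type) where
  rel : Agt → St → St → Prop
  val : ℕ → St → Prop

/-- The model is an epistemic model proper: each agent's relation is an equivalence. -/
def isEquivModel {Agt St : Type} (M : Model Agt St) : Prop :=
  ∀ a, Equivalence (M.rel a)

/-- Formulas: atoms, ⊥, →, ∧, K_a, ▲ (safety), [φ⟡]ψ (pseudo-anonymous announcement),
    [φ⟡!]ψ (safe/intentional anonymous announcement). -/
inductive Form (Agt : Type) : Type where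
  | atom : ℕ → Form Agt
  | bot  : Form Agt
  | imp  : Form Agt → Form Agt → Form Agt
  | and  : Form Agt → Form Agt → Form Agt
  | K    : Agt → Form Agt → Form Agt
  | tri  : Form Agt → Form Agt
  | annA : Form Agt → Form Agt → Form Agt
  | annS : Form Agt → Form Agt → Form Agt

def Form.neg {Agt : Type} (φ : Form Agt) : Form Agt := .imp φ .bot

/-- One step of the safety operator: `⋁_{G ∈ N³} E_G (P ∧ X)`. -/
def fsafe {Agt St : Type} (M : Model Agt St) (P X : St → Prop) (s : St) : Prop :=
  ∃ G : Finset Agt, G.card = 3 ∧ ∀ a ∈ G, ∀ t, M.rel a s t → P t ∧ X t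

/-- `▲P` semantically: greatest fixpoint of `fsafe M P`, i.e. union of post-fixed points. -/
def triSem {Agt St : Type} (M : Model Agt St) (P : St → Prop) (s : St) : Prop :=
  ∃ X : St → Prop, X s ∧ ∀ t, X t → fsafe M P X t

/-- Product update of `M` with an action model whose events are `E`, relation `arel`, and
    (semantic) preconditions `pre`.  States not satisfying the precondition are cut off
    from the relation (this encodes the restriction to legal states). -/
def prodUpd {Agt St E : Type} (M : Model Agt St) (arel : Agt → E → E → Prop)
    (pre : E → St → Prop) : Model Agt (St × E) where
  rel c p q := pre p.2 p.1 ∧ pre q.2 q.1 ∧ M.rel c p.1 q.1 ∧ arel c p.2 q.2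
  val n p := M.val n p.1

/-- Action relation of the pseudo-anonymous action model: `a ∼_c b` iff `(a = c ↔ b = c)`. -/
def anonRel {Agt : Type} (c a b : Agt) : Prop := (a = c ↔ b = c)

/-- The pseudo-anonymous style update `M^{φ⟡}` (with precondition `pre a`). -/
def updA {Agt St : Type} (M : Model Agt St) (pre : Agt → St → Prop) : Model Agt (St × Agt) :=
  prodUpd M anonRel pre

/-- Satisfaction. -/
def Sat {Agt : Type} : {St : Type} → Model Agt St → St → Form Agt → Prop
  | _, M, s, .atom n => M.val n s
  | _, _, _, .bot => False
  | _, M, s, .imp φ ψ => Sat M s φ → Sat M s ψ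
  | _, M, s, .and φ ψ => Sat M s φ ∧ Sat M s ψ
  | _, M, s, .K a φ => ∀ t, M.rel a s t → Sat M t φ
  | _, M, s, .tri φ => triSem M (fun t => Sat M t φ) s
  | _, M, s, .annA φ ψ => ∀ a, (∀ t, M.rel a s t → Sat M t φ) →
      Sat (updA M (fun b t => ∀ u, M.rel b t u → Sat M u φ)) (s, a) ψ
  | _, M, s, .annS φ ψ => ∀ a, (∀ t, M.rel a s t → triSem M (fun u => Sat M u φ) t) →
      Sat (updA M (fun b t => ∀ u, M.rel b t u → triSem M (fun v => Sat M v φ) u)) (s, a) ψ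

/-- The pseudo-anonymous update `M^{φ⟡}`. -/
def updAnn {Agt St : Type} (M : Model Agt St) (φ : Form Agt) : Model Agt (St × Agt) :=
  updA M (fun b t => ∀ u, M.rel b t u → Sat M u φ)

/-- The safe (intentional) anonymous update `M^{φ⟡!}`. -/
def updSafe {Agt St : Type} (M : Model Agt St) (φ : Form Agt) : Model Agt (St × Agt) :=
  updA M (fun b t => ∀ u, M.rel b t u → triSem M (fun v => Sat M v φ) u)

/-- Public announcement update: restriction of `M` to `P` (encoded by cutting the relation). -/
def restrict {Agt St : Type} (M : Model Agt St) (P : St → Prop) : Model Agt St where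
  rel a x y := P x ∧ P y ∧ M.rel a x y
  val := M.val

/-- Iterative approximations `▲_n`. -/
def triN {Agt St : Type} (M : Model Agt St) (P : St → Prop) : ℕ → St → Prop
  | 0 => P
  | n + 1 => fun s => P s ∧ ∃ G : Finset Agt, G.card = 3 ∧
      ∀ a ∈ G, ∀ t, M.rel a s t → triN M P n t

/-- Standard bisimulation between two models. -/
structure Bisim {Agt St₁ St₂ : Type} (M₁ : Model Agt St₁) (M₂ : Model Agt St₂)
    (Z : St₁ → St₂ → Prop) : Prop where
  atoms : ∀ s t, Z s t → ∀ n, (M₁.val n s ↔ M₂.val n t)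
  forth : ∀ s t, Z s t → ∀ a u, M₁.rel a s u → ∃ v, M₂.rel a t v ∧ Z u v
  back  : ∀ s t, Z s t → ∀ a v, M₂.rel a t v → ∃ u, M₁.rel a s u ∧ Z u v

/-- `f` is a group assignment function for `M`. -/
def GroupAssign {Agt St : Type} (M : Model Agt St) (f : St → Finset Agt) : Prop :=
  (∀ t, f t = ∅ ∨ (f t).card = 3) ∧
  (∀ t t' i, i ∈ f t → M.rel i t t' → f t' ≠ ∅)

/-- `σ : Fin (m+1) → St` is an `f`-consistent path. -/
def FPath {Agt St : Type} (M : Model Agt St) (f : St → Finset Agt) (m : ℕ)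
    (σ : Fin (m + 1) → St) : Prop :=
  ∀ k : Fin m, ∃ a ∈ f (σ k.castSucc), M.rel a (σ k.castSucc) (σ k.succ)

theorem exists_forall_of_antitone_of_forall_exists {α : Type*} [Finite α] {Q : ℕ → α → Prop}
    (hQ : ∀ a, Antitone (Q · a)) (h : ∀ n, ∃ a, Q n a) : ∃ a, ∀ n, Q n a := by
  choose g hg using h
  obtain ⟨a, ha⟩ := Finite.exists_infinite_fiber g
  refine ⟨a, fun n => ?_⟩
  obtain ⟨m, hm, hnm⟩ := (Set.infinite_coe_iff.mp ha).exists_gt n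
  exact hQ a hnm.le (hm ▸ hg m)

section Approximants

variable {Agt St : Type} (M : Model Agt St) (P : St → Prop)

theorem triN_succ_le (n : ℕ) (s : St) : triN M P (n + 1) s → triN M P n s := by
  induction n generalizing s with
  | zero => exact fun h => h.1
  | succ n ih =>
    rintro ⟨hP, G, hG, hsucc⟩
    exact ⟨hP, G, hG, fun a ha t hst => ih t (hsucc a ha t hst)⟩

theorem triN_antitone (s : St) : Antitone (triN M P · s) :=
  antitone_nat_of_succ_le fun n => triN_succ_le M P n s

section Reflexive

variable {M P} (hrefl : ∀ a s, M.rel a s s)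
include hrefl

theorem holds_of_triSem {s : St} (h : triSem M P s) : P s := by
  obtain ⟨X, hXs, hX⟩ := h
  obtain ⟨G, hG, hGs⟩ := hX s hXs
  obtain ⟨a, ha⟩ := Finset.card_pos.mp (by omega : 0 < G.card)
  exact (hGs a ha s (hrefl a s)).1

theorem triN_of_triSem (n : ℕ) {s : St} (h : triSem M P s) : triN M P n s := by
  induction n generalizing s with
  | zero => exact holds_of_triSem hrefl h
  | succ n ih =>
    obtain ⟨X, hXs, hX⟩ := h
    obtain ⟨G, hG, hGs⟩ := hX s hXs
    exact ⟨holds_of_triSem hrefl ⟨X, hXs, hX⟩, G, hG,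
      fun a ha t hst => ih ⟨X, (hGs a ha t hst).2, hX⟩⟩

end Reflexive

theorem triSem_of_forall_triN [Finite Agt] {s : St} (h : ∀ n, triN M P n s) :
    triSem M P s := by
  refine ⟨fun t => ∀ n, triN M P n t, h, fun t ht => ?_⟩
  obtain ⟨G, hG⟩ := exists_forall_of_antitone_of_forall_exists
    (Q := fun n (G : Finset Agt) => G.card = 3 ∧ ∀ a ∈ G, ∀ u, M.rel a t u → triN M P n u)
    (fun G m n hmn hn => ⟨hn.1, fun a ha u hu => triN_antitone M P u hmn (hn.2 a ha u hu)⟩)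
    (fun n => (ht (n + 1)).2)
  exact ⟨G, (hG 0).1, fun a ha u hu => ⟨(hG 0).2 a ha u hu, fun n => (hG n).2 a ha u hu⟩⟩

end Approximants

/-- Agents `0, 1` link each even state to its successor, agents `2, 3` each odd one. -/
def chainModel (m : ℕ) : Model (Fin 4) ℕ where
  rel a s t := s = t ∨ (t = s + 1 ∧ s % 2 = a.val / 2) ∨ (s = t + 1 ∧ t % 2 = a.val / 2)
  val _ s := s < m

theorem chainModel_isEquivModel (m : ℕ) : isEquivModel (chainModel m) := fun _ =>
  { refl := fun _ => Or.inl rfl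
    symm := fun h => by simp only [chainModel] at *; omega
    trans := fun h₁ h₂ => by simp only [chainModel] at *; omega }

theorem Fin.exists_mem_div_two_eq_of_card_eq_three :
    ∀ G : Finset (Fin 4), G.card = 3 → ∀ r : Fin 2, ∃ a ∈ G, a.val / 2 = r.val := by
  decide

theorem chainModel_triN_iff (m n s : ℕ) :
    triN (chainModel m) (fun t => Sat (chainModel m) t (.atom 0)) n s ↔ s + n < m := by
  induction n generalizing s with
  | zero => exact Iff.rfl
  | succ n ih =>
    constructor
    · rintro ⟨-, G, hG, hsucc⟩
      obtain ⟨a, ha, has⟩ :=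
        Fin.exists_mem_div_two_eq_of_card_eq_three G hG ⟨s % 2, Nat.mod_lt s two_pos⟩
      have := (ih (s + 1)).mp (hsucc a ha (s + 1) (Or.inr (Or.inl ⟨rfl, has.symm⟩)))
      omega
    · intro hlt
      refine ⟨show s < m by omega, {0, 1, 2}, rfl, fun a _ t hst => (ih t).mpr ?_⟩
      have : t ≤ s + 1 := by rcases hst with h | h | h <;> omega
      omega

theorem stmt17 :
    (¬ ∃ (St : Type) (M : Model (Fin 4) St), isEquivModel M ∧
        ∃ s : St, (∀ n : ℕ, triN M (fun t => Sat M t (.atom 0)) n s) ∧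
          ¬ Sat M s (.tri (.atom 0))) ∧
    (∀ F : Finset ℕ, ∃ (St : Type) (M : Model (Fin 4) St), isEquivModel M ∧
        ∃ s : St, (∀ n ∈ F, triN M (fun t => Sat M t (.atom 0)) n s) ∧
          ¬ Sat M s (.tri (.atom 0))) := by
  refine ⟨fun ⟨St, M, _, s, hall, hnot⟩ => hnot (triSem_of_forall_triN M _ hall), fun F => ?_⟩
  set m := F.sup id + 1
  refine ⟨ℕ, chainModel m, chainModel_isEquivModel m, 0, fun n hn => ?_, fun h => ?_⟩
  · rw [chainModel_triN_iff]
    have : n ≤ F.sup id := Finset.le_sup (f := id) hn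
    omega
  · have := (chainModel_triN_iff m m 0).mp
      (triN_of_triSem (fun a => (chainModel_isEquivModel m a).refl) m h)
    omega
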